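/- arXiv:2201.04797 — 2 statements merged into one kernel-verified Lean document; each statement's English description precedes it below -/
import Mathlib

section
/- Let N, n, m' be natural numbers, img : Fin N → Fin n and cls : Fin N → Fin m' maps such that distinct keypoints in the same image have distinct classes (img i = img j and cls i = cls j imply i = j). Define the N × N real matrices X̂* by X̂* i j = 1 if cls i = cls j and img i ≠ img j, and 0 otherwise, and D by D i j = 1 if img i = img j and i ≠ j, and 0 otherwise. Fix i, j with img i ≠ img j, and assume that if cls i ≠ cls j then there exist keypoints k and l lying in a common image (img k = img l) with cls k = cls i, cls l = cls j, k ≠ i and l ≠ j. Then X̂* i j = 1 if and only if (X̂* * D * X̂*) i j = 0. -/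
/-!
Entry `(i, j)` of `X̂* D X̂*` counts the walks `i → k → l → j` that take a match edge, then a
within-image edge, then a match edge. If `i` and `j` see the same scene point, such a walk would
put the distinct keypoints `k ≠ l` of one image on that same scene point, which is impossible;
if they see different scene points, the joint-visibility witnesses `k, l` give such a walk.
-/

open Finset

section IndicatorMatrix

variable {ι R : Type*} [Fintype ι] [Semiring R]

theorem indicator_mul_indicator_mul_indicator_apply
    (p q r : ι → ι → Prop) [DecidableRel p] [DecidableRel q] [DecidableRel r] (i j : ι) :
    (Matrix.of (fun a b => if p a b then (1 : R) else 0) *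
        Matrix.of (fun a b => if q a b then (1 : R) else 0) *
        Matrix.of (fun a b => if r a b then (1 : R) else 0)) i j =
      #{kl : ι × ι | p i kl.1 ∧ q kl.1 kl.2 ∧ r kl.2 j} := by
  rw [natCast_card_filter, Fintype.sum_prod_type, Matrix.mul_assoc]
  simp only [Matrix.mul_apply, Matrix.of_apply, mul_sum]
  refine sum_congr rfl fun k _ => sum_congr rfl fun l _ => ?_
  by_cases p i k <;> by_cases q k l <;> by_cases r l j <;> simp [*]

theorem indicator_mul_indicator_mul_indicator_apply_eq_zero_iff [CharZero R]
    (p q r : ι → ι → Prop) [DecidableRel p] [DecidableRel q] [DecidableRel r] (i j : ι) :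
    (Matrix.of (fun a b => if p a b then (1 : R) else 0) *
        Matrix.of (fun a b => if q a b then (1 : R) else 0) *
        Matrix.of (fun a b => if r a b then (1 : R) else 0)) i j = 0 ↔
      ¬∃ k l, p i k ∧ q k l ∧ r l j := by
  rw [indicator_mul_indicator_mul_indicator_apply, Nat.cast_eq_zero, card_eq_zero,
    filter_eq_empty_iff]
  simp only [mem_univ, true_implies, Prod.forall, not_exists, not_and]

end IndicatorMatrix

theorem cls_eq_iff_not_exists_match_within_match {κ ι σ : Type*}
    (img : κ → ι) (cls : κ → σ)
    (hdist : ∀ i j : κ, img i = img j → cls i = cls j → i = j) (i j : κ)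
    (hvis : cls i ≠ cls j →
      ∃ k l : κ, img k = img l ∧ cls k = cls i ∧ cls l = cls j ∧ k ≠ i ∧ l ≠ j) :
    cls i = cls j ↔ ¬∃ k l, (cls i = cls k ∧ img i ≠ img k) ∧ (img k = img l ∧ k ≠ l) ∧
      (cls l = cls j ∧ img l ≠ img j) := by
  constructor
  · rintro hij ⟨k, l, ⟨hik, -⟩, ⟨hkl, hne⟩, ⟨hlj, -⟩⟩
    exact hne (hdist k l hkl (hik.symm.trans (hij.trans hlj.symm)))
  · intro hnone
    by_contra hij
    obtain ⟨k, l, hkl, hki, hlj, hk, hl⟩ := hvis hij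
    refine hnone ⟨k, l, ⟨hki.symm, fun h => hk (hdist k i h.symm hki)⟩,
      ⟨hkl, fun h => hij (by rw [← hki, h, hlj])⟩, ⟨hlj, fun h => hl (hdist l j h hlj)⟩⟩

theorem Xstar_eq_one_iff_S2_eq_zero {N n m' : ℕ}
    (img : Fin N → Fin n) (cls : Fin N → Fin m')
    (hdist : ∀ i j : Fin N, img i = img j → cls i = cls j → i = j)
    (Xstar D : Matrix (Fin N) (Fin N) ℝ)
    (hX : ∀ i j : Fin N, Xstar i j = if cls i = cls j ∧ img i ≠ img j then 1 else 0)
    (hD : ∀ i j : Fin N, D i j = if img i = img j ∧ i ≠ j then 1 else 0)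
    (i j : Fin N) (hij : img i ≠ img j)
    (hvis : cls i ≠ cls j →
      ∃ k l : Fin N, img k = img l ∧ cls k = cls i ∧ cls l = cls j ∧ k ≠ i ∧ l ≠ j) :
    Xstar i j = 1 ↔ (Xstar * D * Xstar) i j = 0 := by
  obtain rfl : Xstar = Matrix.of fun a b => if cls a = cls b ∧ img a ≠ img b then 1 else 0 :=
    Matrix.ext hX
  obtain rfl : D = Matrix.of fun a b => if img a = img b ∧ a ≠ b then 1 else 0 :=
    Matrix.ext hD
  rw [indicator_mul_indicator_mul_indicator_apply_eq_zero_iff,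
    ← cls_eq_iff_not_exists_match_within_match img cls hdist i j hvis]
  simp [hij]
end

section
/- Let N and n be natural numbers, img : Fin N → Fin n a map, X an N × N real matrix, and D the N × N real matrix with D i j = 1 if img i = img j and i ≠ j, and 0 otherwise. Then for all natural numbers r, s and all indices i, j: (X^(r+s)) i j + (Xʳ * D * Xˢ) i j = Σ over t : Fin n of ( Σ over k with img k = t of (Xʳ) i k ) · ( Σ over k with img k = t of (Xˢ) k j ). -/
open Matrix Finset

/-! `X ^ (r + s) + X ^ r * D * X ^ s = X ^ r * (1 + D) * X ^ s`, and `1 + D`, the indicator of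
"same image" pairs, factors through the images as `P * Pᵀ` with `P` the keypoint-to-image
assignment matrix. So the sum is `(X ^ r * P) * (Pᵀ * X ^ s)`, and multiplying by `P` or `Pᵀ`
sums over the keypoints of each image. -/

variable {ι κ : Type*} (R : Type*) [DecidableEq κ] [NonAssocSemiring R]

def assignmentMatrix (f : ι → κ) : Matrix ι κ R :=
  Matrix.of fun k t => if f k = t then 1 else 0

def sameBlockMatrix (f : ι → κ) : Matrix ι ι R :=
  Matrix.of fun k l => if f k = f l then 1 else 0

variable {R}

theorem one_add_eq_sameBlockMatrix [DecidableEq ι] (f : ι → κ) (D : Matrix ι ι R)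
    (hD : ∀ k l, D k l = if f k = f l ∧ k ≠ l then 1 else 0) :
    1 + D = sameBlockMatrix R f := by
  ext k l
  by_cases hkl : k = l <;> simp [sameBlockMatrix, hD, hkl, one_apply]

theorem assignmentMatrix_mul_transpose [Fintype κ] (f : ι → κ) :
    assignmentMatrix R f * (assignmentMatrix R f)ᵀ = sameBlockMatrix R f := by
  ext k l
  simp [assignmentMatrix, sameBlockMatrix, mul_apply, eq_comm]

variable [Fintype ι]

theorem mul_assignmentMatrix_apply {m : Type*} (A : Matrix m ι R) (f : ι → κ) (i : m) (t : κ) :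
    (A * assignmentMatrix R f) i t = ∑ k ∈ univ.filter (fun k => f k = t), A i k := by
  simp [assignmentMatrix, mul_apply, sum_filter]

theorem transpose_assignmentMatrix_mul_apply {m : Type*} (f : ι → κ) (B : Matrix ι m R)
    (t : κ) (j : m) :
    ((assignmentMatrix R f)ᵀ * B) t j = ∑ k ∈ univ.filter (fun k => f k = t), B k j := by
  simp [assignmentMatrix, mul_apply, sum_filter]

theorem S1_add_S2_eq {N n : ℕ} (img : Fin N → Fin n)
    (X D : Matrix (Fin N) (Fin N) ℝ)
    (hD : ∀ i j : Fin N, D i j = if img i = img j ∧ i ≠ j then 1 else 0)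
    (r s : ℕ) (i j : Fin N) :
    (X ^ (r + s)) i j + (X ^ r * D * X ^ s) i j =
      ∑ t : Fin n,
        (∑ k ∈ Finset.univ.filter (fun k : Fin N => img k = t), (X ^ r) i k) *
        (∑ k ∈ Finset.univ.filter (fun k : Fin N => img k = t), (X ^ s) k j) := by
  let P := assignmentMatrix ℝ img
  have hfactor : X ^ (r + s) + X ^ r * D * X ^ s = X ^ r * P * (Pᵀ * X ^ s) :=
    calc X ^ (r + s) + X ^ r * D * X ^ s = X ^ r * (1 + D) * X ^ s := by
          rw [pow_add, Matrix.mul_add, Matrix.add_mul, Matrix.mul_one]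
      _ = X ^ r * (P * Pᵀ) * X ^ s := by
          rw [one_add_eq_sameBlockMatrix img D hD, assignmentMatrix_mul_transpose]
      _ = X ^ r * P * (Pᵀ * X ^ s) := by simp only [Matrix.mul_assoc]
  rw [← Matrix.add_apply, hfactor, mul_apply]
  simp only [P, mul_assignmentMatrix_apply, transpose_assignmentMatrix_mul_apply]
end
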